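/- Let I ⊂ (0,∞) be compact, θ a probability measure on I with topological support I, and a, b : I → ℝ continuous with 0 < a(h) ≤ 2 for all h ∈ I. Let γ be the measure on parameter triples (U, ℓ, T) ∈ (0,∞)³ defined by γ(f) = ∫_I ∫_0^1 f(ℓ^h, ℓ, ℓ^{a(h)}) ℓ^{−b(h)} dℓ θ(dh) for nonnegative measurable f. Set D(h) := b(h) − a(h) + 1. Let p be a positive integer such that 0 < h·p + 3 − D(h) < p for all h ∈ I. Then lim_{ε → 0⁺} [ log( γ[ U^p · ((ℓ ∧ ε)/ℓ)^p · ℓ T ] ) / log ε ] = inf_{h ∈ I} ( h·p + 3 − D(h) ), where γ[F(U,ℓ,T)] denotes the γ-integral of the function F of the coordinates and ℓ ∧ ε := min(ℓ, ε). The same limit holds for γ[U^p ℓ T 1_{ℓ < ε}]. (This recovers the multifractal scaling exponent ζ_p = inf_{h∈I}[hp + 3 − D(h)].) -/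

import Mathlib

/-!
For fixed `h` the inner `ℓ`-integral is explicit: with `ζ h = h p + 3 - D(h)` it equals
`ε^ζ/ζ` for the indicator version and `ε^ζ/ζ + (ε^ζ - ε^p)/(p - ζ)` for the `min` version, and
`0 < ζ < p` on the compact `I` makes both comparable to `ε ^ ζ h` with constants uniform in `h`.
The `θ`-integral of such a family is a Laplace-type integral: it is at most a constant times
`ε ^ min ζ`, and at least a constant times `ε ^ (min ζ + δ)`, obtained from a ball around a
minimiser of `ζ` on which `ζ < min ζ + δ`; this ball has positive mass since `θ` has full support
on `I`. Dividing the logarithm by `log ε → -∞` removes the constants, and `δ` is arbitrary.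
-/

open MeasureTheory Real Filter Set Topology Metric Interval

lemma log_div_log_le_of_mul_rpow_le {ε c t x : ℝ} (hε0 : 0 < ε) (hε1 : ε < 1) (hc : 0 < c)
    (h : c * ε ^ t ≤ x) : log x / log ε ≤ log c / log ε + t := by
  have hlog : log ε < 0 := log_neg hε0 hε1
  have : log c + t * log ε ≤ log x := by
    rw [← log_rpow hε0, ← log_mul hc.ne' (by positivity)]
    exact log_le_log (by positivity) h
  rw [div_add' _ _ _ hlog.ne, div_le_div_right_of_neg hlog]
  exact this

lemma le_log_div_log_of_le_mul_rpow {ε C t x : ℝ} (hε0 : 0 < ε) (hε1 : ε < 1) (hx : 0 < x)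
    (h : x ≤ C * ε ^ t) : log C / log ε + t ≤ log x / log ε := by
  have hlog : log ε < 0 := log_neg hε0 hε1
  have hC : 0 < C := pos_of_mul_pos_left (hx.trans_le h) (by positivity)
  have : log x ≤ log C + t * log ε := by
    rw [← log_rpow hε0, ← log_mul hC.ne' (by positivity)]
    exact log_le_log hx h
  rw [div_add' _ _ _ hlog.ne, div_le_div_right_of_neg hlog]
  exact this

theorem tendsto_log_div_log_of_rpow_bounds {F : ℝ → ℝ} {s : ℝ}
    (hF : ∀ δ > 0, ∃ c > 0, ∃ C, ∀ᶠ ε in 𝓝[>] 0, c * ε ^ (s + δ) ≤ F ε ∧ F ε ≤ C * ε ^ (s - δ)) :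
    Tendsto (fun ε => log (F ε) / log ε) (𝓝[>] 0) (𝓝 s) := by
  have hunit : ∀ᶠ ε in 𝓝[>] (0 : ℝ), ε ∈ Ioo 0 1 := Ioo_mem_nhdsGT one_pos
  have hsmall (x : ℝ) : Tendsto (fun ε => x / log ε) (𝓝[>] 0) (𝓝 0) :=
    tendsto_log_nhdsGT_zero.const_div_atBot x
  refine tendsto_order.2 ⟨fun a ha => ?_, fun a ha => ?_⟩
  · obtain ⟨c, hc, C, hbd⟩ := hF ((s - a) / 2) (by linarith)
    filter_upwards [hunit, hbd,
      (hsmall (log C)).eventually (lt_mem_nhds (by linarith : (a - s) / 2 < 0))]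
      with ε ⟨hε0, hε1⟩ ⟨hlow, hupp⟩ hC
    have := le_log_div_log_of_le_mul_rpow hε0 hε1 ((by positivity : 0 < c * _).trans_le hlow) hupp
    linarith
  · obtain ⟨c, hc, C, hbd⟩ := hF ((a - s) / 2) (by linarith)
    filter_upwards [hunit, hbd,
      (hsmall (log c)).eventually (gt_mem_nhds (by linarith : 0 < (a - s) / 2))]
      with ε ⟨hε0, hε1⟩ ⟨hlow, _⟩ hc'
    have := log_div_log_le_of_mul_rpow_le hε0 hε1 hc hlow
    linarith

section Laplace

variable {X : Type*} [MeasurableSpace X] {θ : Measure X} {I : Set X} {f ζ : X → ℝ} {ε t c C : ℝ}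

lemma setIntegral_le_mul_rpow_of_le [IsFiniteMeasure θ] (hε0 : 0 < ε) (hε1 : ε ≤ 1)
    (ht : ∀ x ∈ I, t ≤ ζ x) (hf : ∀ x ∈ I, 0 ≤ f x ∧ f x ≤ C * ε ^ ζ x) :
    ∫ x in I, f x ∂θ ≤ C * θ.real I * ε ^ t := by
  calc ∫ x in I, f x ∂θ ≤ ‖∫ x in I, f x ∂θ‖ := le_norm_self _
    _ ≤ C * ε ^ t * θ.real I := by
      refine norm_setIntegral_le_of_norm_le_const (measure_lt_top θ I) fun x hx => ?_
      obtain ⟨hf0, hfC⟩ := hf x hx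
      have hC : 0 ≤ C := nonneg_of_mul_nonneg_left (hf0.trans hfC) (by positivity)
      rw [norm_of_nonneg hf0]
      exact hfC.trans (mul_le_mul_of_nonneg_left (rpow_le_rpow_of_exponent_ge hε0 hε1 (ht x hx)) hC)
    _ = C * θ.real I * ε ^ t := by ring

lemma mul_rpow_le_setIntegral_of_le {B : Set X} [IsFiniteMeasure θ] (hε0 : 0 < ε) (hε1 : ε ≤ 1)
    (hI : MeasurableSet I) (hB : MeasurableSet B) (hBt : ∀ x ∈ B ∩ I, ζ x ≤ t)
    (hfI : IntegrableOn f I θ) (hf : ∀ x ∈ I, c * ε ^ ζ x ≤ f x) (hc : 0 ≤ c) :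
    c * θ.real (B ∩ I) * ε ^ t ≤ ∫ x in I, f x ∂θ := by
  calc c * θ.real (B ∩ I) * ε ^ t = c * ε ^ t * θ.real (B ∩ I) := by ring
    _ ≤ ∫ x in B ∩ I, f x ∂θ := by
      refine setIntegral_ge_of_const_le_real (hB.inter hI) (measure_ne_top θ _) (fun x hx => ?_)
        (hfI.mono_set inter_subset_right)
      exact (mul_le_mul_of_nonneg_left (rpow_le_rpow_of_exponent_ge hε0 hε1 (hBt x hx)) hc).trans
        (hf x hx.2)
    _ ≤ ∫ x in I, f x ∂θ :=
      setIntegral_mono_set hfI ((ae_restrict_iff' hI).2 (ae_of_all _ fun x hx =>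
        (by positivity : 0 ≤ c * ε ^ ζ x).trans (hf x hx))) (ae_of_all _ inter_subset_right)

theorem tendsto_log_setIntegral_div_log [MetricSpace X] [OpensMeasurableSpace X]
    [IsFiniteMeasure θ] {G : X → ℝ → ℝ}
    (hI : IsCompact I) (hIne : I.Nonempty) (hθ : ∀ x ∈ I, ∀ r > 0, 0 < θ (ball x r ∩ I))
    (hζ : ContinuousOn ζ I) (hc : 0 < c) (hG : ∀ ε ∈ Ioo (0 : ℝ) 1, IntegrableOn (G · ε) I θ)
    (hbd : ∀ ε ∈ Ioo (0 : ℝ) 1, ∀ x ∈ I, c * ε ^ ζ x ≤ G x ε ∧ G x ε ≤ C * ε ^ ζ x) :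
    Tendsto (fun ε => log (∫ x in I, G x ε ∂θ) / log ε) (𝓝[>] 0) (𝓝 (sInf (ζ '' I))) := by
  obtain ⟨x₀, hx₀, hmin⟩ := hI.exists_isMinOn hIne hζ
  have hleast : IsLeast (ζ '' I) (ζ x₀) := ⟨mem_image_of_mem ζ hx₀, forall_mem_image.2 hmin⟩
  rw [hleast.csInf_eq]
  refine tendsto_log_div_log_of_rpow_bounds fun δ hδ => ?_
  obtain ⟨r, hr, hball⟩ := Metric.continuousWithinAt_iff.1 (hζ x₀ hx₀) δ hδ
  have hθB : 0 < θ.real (ball x₀ r ∩ I) :=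
    ENNReal.toReal_pos (hθ x₀ hx₀ r hr).ne' (measure_ne_top θ _)
  refine ⟨c * θ.real (ball x₀ r ∩ I), by positivity, C * θ.real I, ?_⟩
  filter_upwards [Ioo_mem_nhdsGT one_pos] with ε hε
  refine ⟨mul_rpow_le_setIntegral_of_le hε.1 hε.2.le hI.measurableSet measurableSet_ball
    (fun x hx => ?_) (hG ε hε) (fun x hx => (hbd ε hε x hx).1) hc.le,
    setIntegral_le_mul_rpow_of_le (ζ := ζ) hε.1 hε.2.le (fun x hx => ?_) fun x hx => ?_⟩
  · have := hball hx.2 hx.1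
    rw [Real.dist_eq, abs_lt] at this
    linarith
  · linarith [isMinOn_iff.1 hmin x hx]
  · exact ⟨(mul_nonneg hc.le (rpow_nonneg hε.1.le _)).trans (hbd ε hε x hx).1, (hbd ε hε x hx).2⟩

end Laplace

lemma integral_rpow_sub_one {q ε : ℝ} (hq : 0 < q) :
    ∫ x in (0 : ℝ)..ε, x ^ (q - 1) = ε ^ q / q := by
  rw [integral_rpow (Or.inl (by linarith)), sub_add_cancel, zero_rpow hq.ne', sub_zero]

lemma setIntegral_Ioo_indicator_lt {f : ℝ → ℝ} {q ε : ℝ} (hq : 0 < q) (hε0 : 0 < ε)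
    (hε1 : ε ≤ 1) (hf : ∀ x ∈ Ioo 0 ε, f x = x ^ (q - 1)) :
    ∫ x in Ioo 0 1, {y | y < ε}.indicator f x = ε ^ q / q := by
  rw [show {y | y < ε} = Iio ε from rfl, setIntegral_indicator measurableSet_Iio, Ioo_inter_Iio,
    min_eq_right hε1, setIntegral_congr_fun measurableSet_Ioo hf, ← integral_Ioc_eq_integral_Ioo,
    ← intervalIntegral.integral_of_le hε0.le, integral_rpow_sub_one hq]

lemma setIntegral_Ioo_min_div_pow_mul_rpow {p : ℕ} {q ε : ℝ} (hq : 0 < q) (hqp : q < p)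
    (hε0 : 0 < ε) (hε1 : ε < 1) :
    ∫ x in Ioo 0 1, (min x ε / x) ^ p * x ^ (q - 1) =
      ε ^ q / q + (ε ^ q - ε ^ (p : ℝ)) / (p - q) := by
  have hnear : EqOn (fun x => (min x ε / x) ^ p * x ^ (q - 1)) (fun x => x ^ (q - 1)) (Ι 0 ε) := by
    intro x hx
    rw [uIoc_of_le hε0.le] at hx
    simp [min_eq_left hx.2, div_self hx.1.ne']
  have hfar : EqOn (fun x => (min x ε / x) ^ p * x ^ (q - 1))
      (fun x => ε ^ (p : ℝ) * x ^ (q - 1 - p)) (Ι ε 1) := by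
    intro x hx
    rw [uIoc_of_le hε1.le] at hx
    have hx0 : 0 < x := hε0.trans hx.1
    simp only [min_eq_right hx.1.le, div_pow, ← rpow_natCast, rpow_sub hx0]
    field_simp
  have h0 : (0 : ℝ) ∉ [[ε, 1]] := by rw [uIcc_of_le hε1.le]; exact fun h => hε0.not_ge h.1
  rw [← integral_Ioc_eq_integral_Ioo, ← intervalIntegral.integral_of_le zero_le_one,
    ← intervalIntegral.integral_add_adjacent_intervals (b := ε)
      ((intervalIntegrable_congr hnear).2 (intervalIntegral.intervalIntegrable_rpow' (by linarith)))
      ((intervalIntegrable_congr hfar).2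
        ((intervalIntegral.intervalIntegrable_rpow (Or.inr h0)).const_mul _)),
    intervalIntegral.integral_congr_ae (ae_of_all _ fun x hx => hnear hx),
    intervalIntegral.integral_congr_ae (ae_of_all _ fun x hx => hfar hx),
    integral_rpow_sub_one hq, intervalIntegral.integral_const_mul,
    integral_rpow (Or.inr ⟨by linarith, h0⟩)]
  have hpq : (p : ℝ) - q ≠ 0 := by linarith
  have hqp' : q - p ≠ 0 := by linarith
  rw [show q - 1 - (p : ℝ) + 1 = q - p by ring, one_rpow, rpow_sub hε0]
  field_simp
  ring

lemma rpow_pow_mul_mul_rpow_neg {ℓ h A B : ℝ} (p : ℕ) (hℓ : 0 < ℓ) :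
    (ℓ ^ h) ^ p * (ℓ * ℓ ^ A) * ℓ ^ (-B) = ℓ ^ (h * p + 3 - (B - A + 1) - 1) := by
  have : ℓ * ℓ ^ A = ℓ ^ (1 + A) := by rw [rpow_add hℓ, rpow_one]
  rw [this, ← rpow_natCast, ← rpow_mul hℓ.le, ← rpow_add hℓ, ← rpow_add hℓ]
  ring_nf

lemma setIntegral_Ioo_min_eq {p : ℕ} {h A B ε : ℝ} (hq : 0 < h * p + 3 - (B - A + 1))
    (hqp : h * p + 3 - (B - A + 1) < p) (hε : ε ∈ Ioo (0 : ℝ) 1) :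
    ∫ ℓ in Ioo 0 1, (ℓ ^ h) ^ p * (min ℓ ε / ℓ) ^ p * (ℓ * ℓ ^ A) * ℓ ^ (-B) =
      ε ^ (h * p + 3 - (B - A + 1)) / (h * p + 3 - (B - A + 1)) +
        (ε ^ (h * p + 3 - (B - A + 1)) - ε ^ (p : ℝ)) / (p - (h * p + 3 - (B - A + 1))) := by
  rw [← setIntegral_Ioo_min_div_pow_mul_rpow hq hqp hε.1 hε.2]
  refine setIntegral_congr_fun measurableSet_Ioo fun ℓ hℓ => ?_
  rw [← rpow_pow_mul_mul_rpow_neg p hℓ.1]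
  ring

lemma setIntegral_Ioo_indicator_eq {p : ℕ} {h A B ε : ℝ} (hq : 0 < h * p + 3 - (B - A + 1))
    (hε : ε ∈ Ioo (0 : ℝ) 1) :
    ∫ ℓ in Ioo 0 1, {l | l < ε}.indicator (fun l => (l ^ h) ^ p * (l * l ^ A) * l ^ (-B)) ℓ =
      ε ^ (h * p + 3 - (B - A + 1)) / (h * p + 3 - (B - A + 1)) :=
  setIntegral_Ioo_indicator_lt hq hε.1 hε.2.le fun _ hℓ => rpow_pow_mul_mul_rpow_neg p hℓ.1

lemma rpow_div_bounds {p q ε : ℝ} (hq : 0 < q) (hqp : q < p) (hε : 0 ≤ ε) :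
    p⁻¹ * ε ^ q ≤ ε ^ q / q ∧ ε ^ q / q ≤ (q⁻¹ + (p - q)⁻¹) * ε ^ q := by
  have hpq : 0 < p - q := sub_pos.2 hqp
  constructor
  · rw [div_eq_inv_mul]
    gcongr
  · rw [div_eq_inv_mul]
    gcongr
    exact le_add_of_nonneg_right (inv_nonneg.2 hpq.le)

lemma rpow_div_add_bounds {p q ε : ℝ} (hq : 0 < q) (hqp : q < p) (hε0 : 0 < ε) (hε1 : ε ≤ 1) :
    p⁻¹ * ε ^ q ≤ ε ^ q / q + (ε ^ q - ε ^ p) / (p - q) ∧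
      ε ^ q / q + (ε ^ q - ε ^ p) / (p - q) ≤ (q⁻¹ + (p - q)⁻¹) * ε ^ q := by
  have hpq : 0 < p - q := sub_pos.2 hqp
  have hεp : ε ^ p ≤ ε ^ q := rpow_le_rpow_of_exponent_ge hε0 hε1 hqp.le
  constructor
  · exact (rpow_div_bounds hq hqp hε0.le).1.trans
      (le_add_of_nonneg_right (div_nonneg (sub_nonneg.2 hεp) hpq.le))
  · calc _ ≤ ε ^ q / q + ε ^ q / (p - q) := by gcongr; linarith [rpow_nonneg hε0.le p]
      _ = _ := by ring

theorem stmt_18_general (I : Set ℝ)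
    (hIcomp : IsCompact I) (hIne : I.Nonempty)
    (θ : Measure ℝ) [IsProbabilityMeasure θ]
    (hθI : θ Iᶜ = 0)
    (hθfull : ∀ h ∈ I, ∀ r : ℝ, 0 < r → 0 < θ (Metric.ball h r))
    (a b : ℝ → ℝ) (ha : ContinuousOn a I) (hb : ContinuousOn b I)
    (p : ℕ) (hp : 0 < p)
    (hrange : ∀ h ∈ I,
      0 < h * p + 3 - (b h - a h + 1) ∧ h * p + 3 - (b h - a h + 1) < p) :
    Tendsto (fun ε : ℝ =>
        Real.log (∫ h in I, (∫ ℓ in Set.Ioo (0 : ℝ) 1,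
            (ℓ ^ h) ^ p * ((min ℓ ε) / ℓ) ^ p * (ℓ * ℓ ^ a h) * ℓ ^ (-b h)) ∂θ) /
          Real.log ε)
      (nhdsWithin 0 (Set.Ioi 0))
      (nhds (sInf ((fun h => h * p + 3 - (b h - a h + 1)) '' I))) ∧
    Tendsto (fun ε : ℝ =>
        Real.log (∫ h in I, (∫ ℓ in Set.Ioo (0 : ℝ) 1,
            Set.indicator {l : ℝ | l < ε}
              (fun l => (l ^ h) ^ p * (l * l ^ a h) * l ^ (-b h)) ℓ) ∂θ) /
          Real.log ε)
      (nhdsWithin 0 (Set.Ioi 0))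
      (nhds (sInf ((fun h => h * p + 3 - (b h - a h + 1)) '' I))) := by
  set ζ : ℝ → ℝ := fun h => h * p + 3 - (b h - a h + 1)
  have hζ : ContinuousOn ζ I := by fun_prop
  have hζ0 (h) (hh : h ∈ I) : ζ h ≠ 0 := (hrange h hh).1.ne'
  have hζp (h) (hh : h ∈ I) : (p : ℝ) - ζ h ≠ 0 := (sub_pos.2 (hrange h hh).2).ne'
  have hθpos (h) (hh : h ∈ I) (r : ℝ) (hr : r > 0) : 0 < θ (ball h r ∩ I) := by
    rw [measure_inter_conull hθI]; exact hθfull h hh r hr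
  obtain ⟨C, hC⟩ := hIcomp.bddAbove_image (f := fun h => (ζ h)⁻¹ + (p - ζ h)⁻¹)
    (by fun_prop (disch := assumption))
  have hC' (ε : ℝ) (hε : ε ∈ Ioo (0 : ℝ) 1) (h) (hh : h ∈ I) :
      ((ζ h)⁻¹ + (p - ζ h)⁻¹) * ε ^ ζ h ≤ C * ε ^ ζ h :=
    mul_le_mul_of_nonneg_right (hC (mem_image_of_mem _ hh)) (rpow_nonneg hε.1.le _)
  have hεζ (ε : ℝ) (hε : ε ∈ Ioo (0 : ℝ) 1) : ContinuousOn (fun h => ε ^ ζ h) I :=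
    continuousOn_const.rpow hζ fun _ _ => Or.inl hε.1.ne'
  have hc : (0 : ℝ) < (p : ℝ)⁻¹ := inv_pos.2 (Nat.cast_pos.2 hp)
  refine ⟨tendsto_log_setIntegral_div_log hIcomp hIne hθpos hζ hc (C := C) (fun ε hε => ?_)
      fun ε hε h hh => ?_,
    tendsto_log_setIntegral_div_log hIcomp hIne hθpos hζ hc (C := C) (fun ε hε => ?_)
      fun ε hε h hh => ?_⟩
  · have := hεζ ε hε
    refine ContinuousOn.integrableOn_compact hIcomp ((by fun_prop (disch := assumption) :
      ContinuousOn (fun h => ε ^ ζ h / ζ h + (ε ^ ζ h - ε ^ (p : ℝ)) / (p - ζ h)) I).congr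
      fun h hh => setIntegral_Ioo_min_eq (hrange h hh).1 (hrange h hh).2 hε)
  · rw [setIntegral_Ioo_min_eq (hrange h hh).1 (hrange h hh).2 hε]
    obtain ⟨hlo, hhi⟩ := rpow_div_add_bounds (hrange h hh).1 (hrange h hh).2 hε.1 hε.2.le
    exact ⟨hlo, hhi.trans (hC' ε hε h hh)⟩
  · have := hεζ ε hε
    refine ContinuousOn.integrableOn_compact hIcomp ((by fun_prop (disch := assumption) :
      ContinuousOn (fun h => ε ^ ζ h / ζ h) I).congr
      fun h hh => setIntegral_Ioo_indicator_eq (hrange h hh).1 hε)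
  · rw [setIntegral_Ioo_indicator_eq (hrange h hh).1 hε]
    obtain ⟨hlo, hhi⟩ := rpow_div_bounds (hrange h hh).1 (hrange h hh).2 hε.1.le
    exact ⟨hlo, hhi.trans (hC' ε hε h hh)⟩

/-- **Multifractal scaling.** For the measure
`γ(f) = ∫_I ∫_0^1 f(ℓ^h, ℓ, ℓ^{a(h)}) ℓ^{−b(h)} dℓ θ(dh)` on parameter triples
`(U, ℓ, T)`, with `I ⊂ (0,∞)` compact, `θ` a probability measure of full support on
`I`, `a, b` continuous, `0 < a ≤ 2`, `D(h) = b(h) − a(h) + 1`, and `p` a positive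
integer with `0 < hp + 3 − D(h) < p` on `I`, one has
`log γ[U^p ((ℓ∧ε)/ℓ)^p ℓT] / log ε → inf_{h∈I} (hp + 3 − D(h)) = ζ_p` as `ε → 0⁺`,
and the same limit holds for `γ[U^p ℓT 1_{ℓ<ε}]`. -/
theorem stmt_18 (I : Set ℝ) (hIpos : I ⊆ Set.Ioi (0 : ℝ))
    (hIcomp : IsCompact I) (hIne : I.Nonempty)
    (θ : Measure ℝ) [IsProbabilityMeasure θ]
    (hθI : θ Iᶜ = 0)
    (hθfull : ∀ h ∈ I, ∀ r : ℝ, 0 < r → 0 < θ (Metric.ball h r))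
    (a b : ℝ → ℝ) (ha : ContinuousOn a I) (hb : ContinuousOn b I)
    (ha' : ∀ h ∈ I, 0 < a h ∧ a h ≤ 2)
    (p : ℕ) (hp : 0 < p)
    (hrange : ∀ h ∈ I,
      0 < h * p + 3 - (b h - a h + 1) ∧ h * p + 3 - (b h - a h + 1) < p) :
    Tendsto (fun ε : ℝ =>
        Real.log (∫ h in I, (∫ ℓ in Set.Ioo (0 : ℝ) 1,
            (ℓ ^ h) ^ p * ((min ℓ ε) / ℓ) ^ p * (ℓ * ℓ ^ a h) * ℓ ^ (-b h)) ∂θ) /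
          Real.log ε)
      (nhdsWithin 0 (Set.Ioi 0))
      (nhds (sInf ((fun h => h * p + 3 - (b h - a h + 1)) '' I))) ∧
    Tendsto (fun ε : ℝ =>
        Real.log (∫ h in I, (∫ ℓ in Set.Ioo (0 : ℝ) 1,
            Set.indicator {l : ℝ | l < ε}
              (fun l => (l ^ h) ^ p * (l * l ^ a h) * l ^ (-b h)) ℓ) ∂θ) /
          Real.log ε)
      (nhdsWithin 0 (Set.Ioi 0))
      (nhds (sInf ((fun h => h * p + 3 - (b h - a h + 1)) '' I))) :=
  stmt_18_general I hIcomp hIne θ hθI hθfull a b ha hb p hp hrange
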